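/- Let h be a real number with h ≠ −k/2 for every integer k ≥ 0. Then the operators J_m form a family of spin-1 tensor operators for 𝔰𝔩(2,ℂ): [l_i, J_m] = −m·J_{m+i} on ℂ[z] for every i ∈ {−1, 0, 1} and every m ∈ ℤ. -/

import Mathlib

/-!
The Leibniz rule gives `[z, D] = -1`, and since `l₀ = zD + h`, `l₁ = zD² + 2hD` this yields
`[l₀, D] = -D` and `[l₁, D] = -D²`. On the monomial basis every operator involved is a weighted
shift, and `[l₋₁, F] = F²`, `[l₀, F] = F`, `[l₁, F] = 1` reduce to identities of rational
functions of `n` whose denominators `n + 2h` are nonzero by nondegeneracy. In both cases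
`[lᵢ, B] = c • B ^ k` with `k = 1 ± i`, and since `B` commutes with `B ^ k`, `ad lᵢ` acts on powers
of `B` as a derivation: `[lᵢ, B ^ (n + 1)] = (n + 1) c • B ^ (n + k)`.
-/

open Polynomial

noncomputable section

/-- Operators (ℂ-linear endomorphisms) on ℂ[z], realized as `Polynomial ℂ`. -/
abbrev E : Type := Module.End ℂ (Polynomial ℂ)

/-- The differentiation operator `D(p) = p'`. -/
def Dop : E := Polynomial.derivative

/-- Multiplication by `z`. -/
def Mz : E := LinearMap.mulLeft ℂ (X : Polynomial ℂ)

/-- `l₋₁(p) = z·p`. -/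
def lm1 : E := Mz

/-- `l₀(p) = z·p' + h·p`. -/
def l0 (h : ℝ) : E := Mz * Dop + (h : ℂ) • (1 : E)

/-- `l₁(p) = z·p'' + 2h·p'`. -/
def l1 (h : ℝ) : E := Mz * Dop ^ 2 + ((2 * h : ℝ) : ℂ) • Dop

/-- Commutator `[A,B] = A∘B − B∘A`. -/
def opComm (A B : E) : E := A * B - B * A

/-- The weight `w h n = n!·(2h)(2h+1)⋯(2h+n−1)`, i.e. the squared norm `⟨zⁿ, zⁿ⟩`
in the unitarizable Verma module. -/
def w (h : ℝ) (n : ℕ) : ℝ := (n.factorial : ℝ) * ∏ i ∈ Finset.range n, (2 * h + (i : ℝ))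

theorem Polynomial.lhom_ext_X_pow {R M : Type*} [CommSemiring R] [AddCommMonoid M] [Module R M]
    {f g : R[X] →ₗ[R] M} (hfg : ∀ n, f (X ^ n) = g (X ^ n)) : f = g :=
  lhom_ext' fun n => LinearMap.ext_ring <| by simpa [monomial_one_right_eq_X_pow] using hfg n

section Commutator

theorem opComm_mul_right (A B C : E) : opComm A (B * C) = opComm A B * C + B * opComm A C := by
  simp only [opComm, sub_mul, mul_sub, mul_assoc]
  abel

theorem opComm_one (A : E) : opComm A 1 = 0 := by
  simp [opComm]

theorem opComm_pow_succ_of_opComm_eq_smul_pow {A B : E} {c : ℂ} {k : ℕ}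
    (hAB : opComm A B = c • B ^ k) (n : ℕ) :
    opComm A (B ^ (n + 1)) = (((n : ℂ) + 1) * c) • B ^ (n + k) := by
  induction n with
  | zero => simp [hAB]
  | succ n ih =>
    rw [pow_succ, opComm_mul_right, ih, hAB, smul_mul_assoc, mul_smul_comm, ← pow_succ,
      ← pow_add, add_right_comm n k 1, add_right_comm n 1 k, ← add_smul]
    congr 1
    push_cast
    ring

end Commutator

section Derivative

theorem opComm_Mz_Dop : opComm Mz Dop = -1 := by
  refine LinearMap.ext fun p => ?_
  simp [opComm, Mz, Dop, derivative_mul]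

theorem opComm_l0_Dop (h : ℝ) : opComm (l0 h) Dop = -Dop := by
  have hl0 : opComm (l0 h) Dop = opComm Mz Dop * Dop := by
    simp only [opComm, l0, add_mul, mul_add, sub_mul, mul_assoc, smul_mul_assoc, mul_smul_comm,
      one_mul, mul_one]
    abel
  rw [hl0, opComm_Mz_Dop]
  exact neg_one_mul Dop

theorem opComm_l1_Dop (h : ℝ) : opComm (l1 h) Dop = -Dop ^ 2 := by
  have hl1 : opComm (l1 h) Dop = opComm Mz Dop * Dop ^ 2 := by
    simp only [opComm, l1, add_mul, mul_add, sub_mul, mul_assoc, smul_mul_assoc, mul_smul_comm,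
      ← pow_succ', ← pow_succ]
    abel
  rw [hl1, opComm_Mz_Dop]
  exact neg_one_mul (Dop ^ 2)

end Derivative

section Monomial

variable (h : ℝ) (n : ℕ)

theorem Mz_X_pow : Mz (X ^ n) = X ^ (n + 1) := by
  simp [Mz, pow_succ']

theorem Dop_X_pow_succ : Dop (X ^ (n + 1)) = ((n : ℂ) + 1) • X ^ n := by
  simp [Dop, smul_eq_C_mul]

theorem Mz_mul_Dop_X_pow : (Mz * Dop) (X ^ n) = (n : ℂ) • X ^ n := by
  cases n with
  | zero => simp [Dop]
  | succ n => rw [Module.End.mul_apply, Dop_X_pow_succ, map_smul, Mz_X_pow, Nat.cast_succ]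

theorem l0_X_pow : l0 h (X ^ n) = ((n : ℂ) + h) • X ^ n := by
  rw [l0, LinearMap.add_apply, Mz_mul_Dop_X_pow, add_smul]
  rfl

theorem l1_X_pow_succ : l1 h (X ^ (n + 1)) = (((n : ℂ) + 1) * (n + 2 * h)) • X ^ n := by
  rw [l1, LinearMap.add_apply, sq, ← mul_assoc, Module.End.mul_apply, Dop_X_pow_succ, map_smul,
    Mz_mul_Dop_X_pow, LinearMap.smul_apply, Dop_X_pow_succ, smul_smul, smul_smul, ← add_smul]
  congr 1
  push_cast
  ring

theorem l1_one : l1 h 1 = 0 := by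
  simp [l1, Dop, sq]

end Monomial

section Lowering

variable {h : ℝ} {F : E} (hne : ∀ n : ℕ, (n : ℂ) + 2 * h ≠ 0)
  (hF : ∀ n : ℕ, F (X ^ n) = (((n : ℂ) + 2 * h)⁻¹) • X ^ (n + 1))
include hne hF

theorem opComm_Mz_F : opComm Mz F = F ^ 2 := by
  refine Polynomial.lhom_ext_X_pow fun n => ?_
  have hn := hne n
  have hn1 := hne (n + 1)
  push_cast at hn1
  simp only [opComm, LinearMap.sub_apply, Module.End.mul_apply, sq, hF, map_smul, Mz_X_pow,
    smul_smul, ← sub_smul]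
  congr 1
  push_cast
  field_simp
  ring

theorem opComm_l0_F : opComm (l0 h) F = F := by
  refine Polynomial.lhom_ext_X_pow fun n => ?_
  have hn := hne n
  simp only [opComm, LinearMap.sub_apply, Module.End.mul_apply, hF, map_smul, l0_X_pow,
    smul_smul, ← sub_smul]
  congr 1
  push_cast
  field_simp
  ring

theorem opComm_l1_F : opComm (l1 h) F = 1 := by
  refine Polynomial.lhom_ext_X_pow fun n => ?_
  have hn := hne n
  simp only [opComm, LinearMap.sub_apply, Module.End.mul_apply, Module.End.one_apply, hF,
    map_smul, l1_X_pow_succ, smul_smul]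
  cases n with
  | zero =>
    rw [pow_zero, l1_one, map_zero, sub_zero]
    convert one_smul ℂ (1 : ℂ[X]) using 2
    simp only [Nat.cast_zero, zero_add, one_mul] at hn ⊢
    exact inv_mul_cancel₀ hn
  | succ n =>
    have hn' := hne n
    rw [l1_X_pow_succ, map_smul, hF, smul_smul, ← sub_smul]
    convert one_smul ℂ (X ^ (n + 1) : ℂ[X]) using 2
    push_cast at hn ⊢
    field_simp
    ring

end Lowering

section TensorOperator

variable {A B : E} {J : ℤ → E} {k : ℕ} {i : ℤ}

theorem opComm_J_natCast (hJ : ∀ n : ℕ, J n = B ^ n) (hki : (k : ℤ) = 1 + i)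
    (hAB : opComm A B = -B ^ k) (m : ℕ) : opComm A (J m) = ((-m : ℤ) : ℂ) • J (m + i) := by
  cases m with
  | zero =>
    have hJ0 : J 0 = 1 := by simpa using hJ 0
    simp [hJ0, opComm_one]
  | succ n =>
    have hidx : ((n + 1 : ℕ) : ℤ) + i = (n + k : ℕ) := by push_cast; omega
    rw [hidx, hJ, hJ, opComm_pow_succ_of_opComm_eq_smul_pow (c := -1)
      (hAB.trans (neg_one_smul ℂ _).symm)]
    congr 1
    push_cast
    ring

theorem opComm_J_neg_natCast (hJ : ∀ n : ℕ, J (-n) = B ^ n) (hki : (k : ℤ) = 1 - i)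
    (hAB : opComm A B = B ^ k) (m : ℕ) :
    opComm A (J (-m)) = ((-(-m) : ℤ) : ℂ) • J (-m + i) := by
  cases m with
  | zero =>
    have hJ0 : J 0 = 1 := by simpa using hJ 0
    simp [hJ0, opComm_one]
  | succ n =>
    have hidx : -((n + 1 : ℕ) : ℤ) + i = -(n + k : ℕ) := by push_cast; omega
    rw [hidx, hJ, hJ, opComm_pow_succ_of_opComm_eq_smul_pow (c := 1)
      (hAB.trans (one_smul ℂ _).symm)]
    congr 1
    push_cast
    ring

end TensorOperator

/-- For nondegenerate extremal weight `h`, the operators `Jₘ`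
(`J₀ = id`, `Jₘ = D^m`, `J₋ₘ = F^m` for `m ≥ 1`) form a family of spin-1 tensor operators:
`[lᵢ, Jₘ] = −m·J_{m+i}` for `i ∈ {−1,0,1}` and all `m ∈ ℤ`. -/
theorem stmt_11 (h : ℝ) (hh : ∀ k : ℕ, h ≠ -(k : ℝ) / 2)
    (F : E) (hF : ∀ n : ℕ, F (X ^ n) = (((n : ℂ) + 2 * h)⁻¹) • X ^ (n + 1))
    (J : ℤ → E)
    (hJ0 : J 0 = 1)
    (hJpos : ∀ m : ℕ, 1 ≤ m → J (m : ℤ) = Dop ^ m)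
    (hJneg : ∀ m : ℕ, 1 ≤ m → J (-(m : ℤ)) = F ^ m) :
    ∀ m : ℤ,
      opComm lm1 (J m) = ((-m : ℤ) : ℂ) • J (m + -1) ∧
      opComm (l0 h) (J m) = ((-m : ℤ) : ℂ) • J m ∧
      opComm (l1 h) (J m) = ((-m : ℤ) : ℂ) • J (m + 1) := by
  have hne : ∀ n : ℕ, (n : ℂ) + 2 * h ≠ 0 := fun n hn =>
    hh n (by linarith [show (n : ℝ) + 2 * h = 0 by exact_mod_cast hn])
  have hJD : ∀ n : ℕ, J n = Dop ^ n := fun n => by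
    rcases n.eq_zero_or_pos with rfl | hn
    · simpa using hJ0
    · exact hJpos n hn
  have hJF : ∀ n : ℕ, J (-n) = F ^ n := fun n => by
    rcases n.eq_zero_or_pos with rfl | hn
    · simpa using hJ0
    · exact hJneg n hn
  intro m
  obtain ⟨n, rfl | rfl⟩ := m.eq_nat_or_neg
  · refine ⟨opComm_J_natCast (k := 0) hJD (by norm_num) ?_ n, ?_,
      opComm_J_natCast (k := 2) hJD (by norm_num) (opComm_l1_Dop h) n⟩
    · rw [lm1, opComm_Mz_Dop, pow_zero]
    · simpa only [add_zero] using
        opComm_J_natCast (k := 1) (i := 0) hJD rfl (by rw [opComm_l0_Dop, pow_one]) n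
  · refine ⟨opComm_J_neg_natCast (k := 2) hJF (by norm_num) (opComm_Mz_F hne hF) n, ?_,
      opComm_J_neg_natCast (k := 0) hJF (by norm_num) ?_ n⟩
    · simpa only [add_zero] using
        opComm_J_neg_natCast (k := 1) (i := 0) hJF rfl (by rw [opComm_l0_F hne hF, pow_one]) n
    · rw [opComm_l1_F hne hF, pow_zero]

end
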